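/- arXiv:1307.7657 — 3 statements merged into one kernel-verified Lean document; each statement's English description precedes it below -/
import Mathlib

section
/- Let J be a strongly stable monomial ideal in the polynomial ring A[x₀,…,xₙ] over a commutative ring A. Then every monomial x^α ∈ J can be written uniquely as a product x^α = x^γ · x^δ with x^γ ∈ B_J and min x^γ ≥ max x^δ (this decomposition is denoted x^α = x^γ ∗_J x^δ). Moreover, x^δ <_Lex x^η for every monomial x^η such that x^η divides x^α and the cofactor x^{α−η} does not lie in J. -/
open MvPolynomial

noncomputable section

/-- Exponent vectors of monomials in the variables `x₀, …, xₙ`. -/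
abbrev Mon (n : ℕ) : Type := Fin (n + 1) →₀ ℕ

namespace MarkedFamilies

variable {n : ℕ}

/-- The total degree of a monomial given by its exponent vector. -/
def mdeg (α : Mon n) : ℕ := α.sum fun _ e => e

/-- A monomial ideal, identified with its (upward closed) set of monomials. -/
def IsMonomialIdeal (J : Set (Mon n)) : Prop := ∀ α ∈ J, ∀ δ : Mon n, α + δ ∈ J

/-- A strongly stable monomial ideal: a monomial ideal such that for every monomial
`x^α ∈ J`, every variable `x_j` dividing `x^α` and every `i > j`, `(x_i/x_j)·x^α ∈ J`. -/
def IsStronglyStable (J : Set (Mon n)) : Prop :=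
  IsMonomialIdeal J ∧
    ∀ α ∈ J, ∀ j : Fin (n + 1), α j ≠ 0 → ∀ i : Fin (n + 1), j < i →
      α - Finsupp.single j 1 + Finsupp.single i 1 ∈ J

/-- The minimal monomial generators `B_J` of a monomial ideal `J`. -/
def minGens (J : Set (Mon n)) : Set (Mon n) :=
  {α | α ∈ J ∧ ∀ j : Fin (n + 1), α j ≠ 0 → α - Finsupp.single j 1 ∉ J}

/-- `min x^γ ≥ max x^δ`: every variable dividing `x^γ` is at least every variable
dividing `x^δ` (vacuously true when either monomial is `1`). -/
def minGeMax (γ δ : Mon n) : Prop := ∀ i ∈ γ.support, ∀ j ∈ δ.support, j ≤ i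

/-- Lexicographic order induced by `x₀ < ⋯ < xₙ`: `a <ₗₑₓ b` iff at the largest
index where they differ, `a` has the smaller exponent. -/
def lexLt (a b : Mon n) : Prop :=
  ∃ i : Fin (n + 1), a i < b i ∧ ∀ j : Fin (n + 1), i < j → a j = b j

/-- A saturated strongly stable ideal: strongly stable and no minimal generator is
divisible by `x₀`. -/
def IsSaturatedSS (J : Set (Mon n)) : Prop :=
  IsStronglyStable J ∧ ∀ α ∈ minGens J, α 0 = 0

/-- The truncation `J_{≥ t}`: the (monomial) ideal generated by the monomials of `J`
of degree at least `t`. -/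
def truncSet (J : Set (Mon n)) (t : ℕ) : Set (Mon n) := {α | α ∈ J ∧ t ≤ mdeg α}

section Ring

variable (A : Type*) [CommRing A]

/-- `⟨N(J)⟩`: the `A`-span of the monomials not in `J`. -/
def nSpan (J : Set (Mon n)) : Submodule A (MvPolynomial (Fin (n + 1)) A) :=
  Submodule.span A {p | ∃ β : Mon n, β ∉ J ∧ p = monomial β (1 : A)}

/-- `⟨N(J)_s⟩`: the `A`-span of the monomials of degree `s` not in `J`. -/
def nSpanDeg (J : Set (Mon n)) (s : ℕ) : Submodule A (MvPolynomial (Fin (n + 1)) A) :=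
  Submodule.span A {p | ∃ β : Mon n, β ∉ J ∧ mdeg β = s ∧ p = monomial β (1 : A)}

/-- `I_s`: the degree-`s` homogeneous component of an ideal, as an `A`-submodule. -/
def idealDeg (I : Ideal (MvPolynomial (Fin (n + 1)) A)) (s : ℕ) :
    Submodule A (MvPolynomial (Fin (n + 1)) A) :=
  Submodule.restrictScalars A I ⊓ homogeneousSubmodule (Fin (n + 1)) A s

/-- `I_{≥ s}`: the ideal `⊕_{t ≥ s} I_t`, i.e. the ideal generated by the homogeneous
elements of `I` of degree at least `s`. -/
def idealGeq (I : Ideal (MvPolynomial (Fin (n + 1)) A)) (s : ℕ) :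
    Ideal (MvPolynomial (Fin (n + 1)) A) :=
  Ideal.span {f | f ∈ I ∧ ∃ t : ℕ, s ≤ t ∧ f.IsHomogeneous t}

/-- A homogeneous ideal of the polynomial ring. -/
def IsHomogIdeal (I : Ideal (MvPolynomial (Fin (n + 1)) A)) : Prop :=
  ∀ f ∈ I, ∀ s : ℕ, homogeneousComponent s f ∈ I

variable {A}

/-- A `J`-marked set: a family assigning to each minimal generator `x^α ∈ B_J` a
polynomial `f_α = x^α − Σ_{x^β ∈ N(J)_{|α|}} c_{αβ} x^β`. -/
def IsMarkedSet (J : Set (Mon n)) (F : Mon n → MvPolynomial (Fin (n + 1)) A) : Prop :=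
  ∀ α ∈ minGens J, (F α).coeff α = 1 ∧
    ∀ β ∈ (F α).support, β ≠ α → β ∉ J ∧ mdeg β = mdeg α

/-- The ideal generated by a marked set. -/
def markedIdeal (J : Set (Mon n)) (F : Mon n → MvPolynomial (Fin (n + 1)) A) :
    Ideal (MvPolynomial (Fin (n + 1)) A) :=
  Ideal.span (F '' minGens J)

/-- A `J`-marked basis: a `J`-marked set `F` with `A[x] = (F) ⊕ ⟨N(J)⟩` as `A`-modules. -/
def IsMarkedBasis (J : Set (Mon n)) (F : Mon n → MvPolynomial (Fin (n + 1)) A) : Prop :=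
  IsMarkedSet J F ∧
    IsCompl (Submodule.restrictScalars A (markedIdeal J F)) (nSpan A J)

/-- `F_J^{(s)} = { x^δ f_α : deg(x^δ f_α) = s, min x^α ≥ max x^δ }`. -/
def FSet (J : Set (Mon n)) (F : Mon n → MvPolynomial (Fin (n + 1)) A) (s : ℕ) :
    Set (MvPolynomial (Fin (n + 1)) A) :=
  {p | ∃ α δ : Mon n, α ∈ minGens J ∧ mdeg α + mdeg δ = s ∧ minGeMax α δ ∧
        p = monomial δ (1 : A) * F α}

/-- `F̂_J^{(s)} = { x^δ f_α : deg(x^δ f_α) = s, min x^α < max x^δ }`. -/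
def FHatSet (J : Set (Mon n)) (F : Mon n → MvPolynomial (Fin (n + 1)) A) (s : ℕ) :
    Set (MvPolynomial (Fin (n + 1)) A) :=
  {p | ∃ α δ : Mon n, α ∈ minGens J ∧ mdeg α + mdeg δ = s ∧ ¬ minGeMax α δ ∧
        p = monomial δ (1 : A) * F α}

/-- `SF_J^{(s)} = { x^δ f_β − x^γ f_α : x^δ f_β ∈ F̂_J^{(s)}, x^γ f_α ∈ F_J^{(s)},
x^δ x^β = x^γ x^α }`. -/
def SFSet (J : Set (Mon n)) (F : Mon n → MvPolynomial (Fin (n + 1)) A) (s : ℕ) :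
    Set (MvPolynomial (Fin (n + 1)) A) :=
  {p | ∃ α γ β δ : Mon n, α ∈ minGens J ∧ β ∈ minGens J ∧
      mdeg β + mdeg δ = s ∧ ¬ minGeMax β δ ∧
      mdeg α + mdeg γ = s ∧ minGeMax α γ ∧
      δ + β = γ + α ∧ p = monomial δ (1 : A) * F β - monomial γ (1 : A) * F α}

/-- A `(J_s)`-marked set: one marked polynomial `f̃_γ = x^γ − Σ_{x^δ ∈ N(J)_s} d_{γδ} x^δ`
for each monomial `x^γ` of degree `s` in `J`. -/
def IsTruncMarkedSet (J : Set (Mon n)) (s : ℕ)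
    (f : Mon n → MvPolynomial (Fin (n + 1)) A) : Prop :=
  ∀ γ : Mon n, γ ∈ J → mdeg γ = s →
    (f γ).coeff γ = 1 ∧ ∀ β ∈ (f γ).support, β ≠ γ → β ∉ J ∧ mdeg β = s

end Ring

/-- Index set for the generic coefficients `C_{αβ}` (`x^α ∈ B_J`, `x^β ∈ N(J)_{|α|}`). -/
abbrev CIdx (J : Set (Mon n)) : Type :=
  {p : Mon n × Mon n // p.1 ∈ minGens J ∧ p.2 ∉ J ∧ mdeg p.2 = mdeg p.1}

/-- The coefficient ring `ℤ[C]`. -/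
abbrev ZC (J : Set (Mon n)) : Type := MvPolynomial (CIdx J) ℤ

/-- The generic `J`-marked set `𝓕_J = { x^α − Σ_{x^β ∈ N(J)_{|α|}} C_{αβ} x^β }`
in `ℤ[C][x]`, characterized through its coefficients. -/
def IsGenericMarkedSet (J : Set (Mon n))
    (𝓕 : Mon n → MvPolynomial (Fin (n + 1)) (ZC J)) : Prop :=
  ∀ α : Mon n, ∀ hα : α ∈ minGens J,
    (𝓕 α).coeff α = 1 ∧
    (∀ γ : Mon n, ∀ hγ : γ ∉ J ∧ mdeg γ = mdeg α,
      (𝓕 α).coeff γ = - MvPolynomial.X ⟨(α, γ), hα, hγ.1, hγ.2⟩) ∧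
    (∀ γ : Mon n, γ ≠ α → ¬(γ ∉ J ∧ mdeg γ = mdeg α) → (𝓕 α).coeff γ = 0)

/-- The ideal `𝔦_J ⊆ ℤ[C]` generated by the `x`-coefficients of all polynomials
in `(𝓕_J) ∩ ⟨N(J)⟩`. -/
def markedCoeffIdeal (J : Set (Mon n))
    (𝓕 : Mon n → MvPolynomial (Fin (n + 1)) (ZC J)) : Ideal (ZC J) :=
  Ideal.span {c : ZC J | ∃ p : MvPolynomial (Fin (n + 1)) (ZC J),
    p ∈ markedIdeal J 𝓕 ∧ p ∈ nSpan (ZC J) J ∧ ∃ γ : Mon n, p.coeff γ = c}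

/-- The evaluation homomorphism `φ_{F_J} : ℤ[C] → A`, `C_{αβ} ↦ c_{αβ}`, associated to a
`J`-marked set `F` with `f_α = x^α − Σ c_{αβ} x^β` (so `c_{αβ} = −(F α).coeff β`). -/
noncomputable def evalHom (J : Set (Mon n)) {A : Type*} [CommRing A]
    (F : Mon n → MvPolynomial (Fin (n + 1)) A) : ZC J →+* A :=
  MvPolynomial.eval₂Hom (Int.castRingHom A) fun p => -((F p.val.1).coeff p.val.2)

/-- `x^γ` is the `σ`-leading monomial of `g` (with nonzero leading coefficient). -/
def IsLeadingMon {A : Type*} [CommRing A] (σlt : Mon n → Mon n → Prop)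
    (g : MvPolynomial (Fin (n + 1)) A) (γ : Mon n) : Prop :=
  g.coeff γ ≠ 0 ∧ ∀ δ ∈ g.support, δ ≠ γ → σlt δ γ

/-- `LC(I, x^γ)`: the set of leading coefficients at `x^γ` of elements of `I`,
together with `0`. -/
def LCset {A : Type*} [CommRing A] (σlt : Mon n → Mon n → Prop)
    (I : Ideal (MvPolynomial (Fin (n + 1)) A)) (γ : Mon n) : Set A :=
  {a | ∃ g ∈ I, IsLeadingMon σlt g γ ∧ g.coeff γ = a} ∪ {0}

/-- A monic ideal with respect to the term ordering `σ`. -/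
def IsMonicIdeal {A : Type*} [CommRing A] (σlt : Mon n → Mon n → Prop)
    (I : Ideal (MvPolynomial (Fin (n + 1)) A)) : Prop :=
  ∀ γ : Mon n, LCset σlt I γ = {0} ∨ LCset σlt I γ = Set.univ

/-- The set of `σ`-leading monomials of elements of `I` (i.e. `in_σ(I)`,
identified with its set of monomials). -/
def leadingMons {A : Type*} [CommRing A] (σlt : Mon n → Mon n → Prop)
    (I : Ideal (MvPolynomial (Fin (n + 1)) A)) : Set (Mon n) :=
  {γ | ∃ g ∈ I, IsLeadingMon σlt g γ}

end MarkedFamilies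
end
namespace StmtZeroAux

open MarkedFamilies

variable {n : ℕ}

lemma mem_of_le {J : Set (Mon n)} (hJ : IsMonomialIdeal J) {γ μ : Mon n}
    (h : γ ∈ J) (hle : γ ≤ μ) : μ ∈ J := by
  have := hJ γ h (μ - γ)
  rwa [add_tsub_cancel_of_le hle] at this

lemma mdeg_add (a b : Mon n) : mdeg (a + b) = mdeg a + mdeg b := by
  unfold mdeg
  exact Finsupp.sum_add_index' (fun _ => rfl) (fun _ _ _ => rfl)

lemma mdeg_single (m : Fin (n + 1)) : mdeg (Finsupp.single m 1) = 1 := by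
  unfold mdeg
  simp [Finsupp.sum_single_index]

lemma exists_decomp {J : Set (Mon n)} (hJ : IsStronglyStable J) :
    ∀ α ∈ J, ∃ γ δ : Mon n, γ ∈ minGens J ∧ minGeMax γ δ ∧ α = γ + δ := by
  suffices H : ∀ d : ℕ, ∀ α ∈ J, mdeg α = d →
      ∃ γ δ : Mon n, γ ∈ minGens J ∧ minGeMax γ δ ∧ α = γ + δ by
    intro α hα; exact H (mdeg α) α hα rfl
  intro d
  induction d using Nat.strong_induction_on with
  | _ d IH =>
    intro α hα hd
    by_cases hmin : α ∈ minGens J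
    · exact ⟨α, 0, hmin, fun i _ j hj => by simp at hj, (add_zero α).symm⟩
    · -- α not a minimal generator: some x_j divides α with α - e_j ∈ J
      have : ∃ j : Fin (n + 1), α j ≠ 0 ∧ α - Finsupp.single j 1 ∈ J := by
        by_contra hc
        push_neg at hc
        exact hmin ⟨hα, fun j hj => hc j hj⟩
      obtain ⟨j, hjne, hjJ⟩ := this
      -- the minimal index in the support of α
      have hsupp : α.support.Nonempty := ⟨j, Finsupp.mem_support_iff.mpr hjne⟩
      obtain ⟨m, hmmem, hmle⟩ : ∃ m, m ∈ α.support ∧ ∀ i ∈ α.support, m ≤ i :=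
        ⟨α.support.min' hsupp, α.support.min'_mem hsupp,
          fun i hi => α.support.min'_le i hi⟩
      have hmne : α m ≠ 0 := Finsupp.mem_support_iff.mp hmmem
      -- α - e_m ∈ J
      have hkey : α - Finsupp.single m 1 ∈ J := by
        rcases eq_or_ne j m with rfl | hjm
        · exact hjJ
        · have hmj : m < j :=
            lt_of_le_of_ne (hmle j (Finsupp.mem_support_iff.mpr hjne)) (Ne.symm hjm)
          have hβm : ((α - Finsupp.single j 1 : Mon n) : Fin (n+1) → ℕ) m ≠ 0 := by
            rw [Finsupp.tsub_apply, Finsupp.single_apply, if_neg hjm]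
            omega
          have := hJ.2 _ hjJ m hβm j hmj
          have heq : α - Finsupp.single j 1 - Finsupp.single m 1 + Finsupp.single j 1
              = α - Finsupp.single m 1 := by
            ext i
            simp only [Finsupp.add_apply, Finsupp.tsub_apply, Finsupp.single_apply]
            by_cases h1 : j = i
            · subst h1
              rw [if_pos rfl, if_neg (Ne.symm hjm)]
              omega
            · rw [if_neg h1]
              by_cases h2 : m = i
              · rw [if_pos h2]
                omega
              · rw [if_neg h2]
                omega
          rwa [heq] at this
      -- induct on α - e_m
      have hle1 : Finsupp.single m 1 ≤ α := by
        rw [Finsupp.le_def]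
        intro i
        rw [Finsupp.single_apply]
        split
        · next h => rw [← h]; omega
        · omega
      have hαeq : α - Finsupp.single m 1 + Finsupp.single m 1 = α :=
        tsub_add_cancel_of_le hle1
      have hdlt : mdeg (α - Finsupp.single m 1) < d := by
        have := mdeg_add (α - Finsupp.single m 1) (Finsupp.single m 1)
        rw [hαeq, hd, mdeg_single] at this
        omega
      obtain ⟨γ, δ', hγ, hmm, heq⟩ := IH _ hdlt _ hkey rfl
      refine ⟨γ, δ' + Finsupp.single m 1, hγ, ?_, ?_⟩
      · intro i hi k hk
        rw [Finsupp.mem_support_iff, Finsupp.add_apply] at hk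
        by_cases hkd : δ' k ≠ 0
        · exact hmm i hi k (Finsupp.mem_support_iff.mpr hkd)
        · push_neg at hkd
          have : (Finsupp.single m 1 : Mon n) k ≠ 0 := by omega
          have hkm : k = m := by
            by_contra h
            rw [Finsupp.single_apply, if_neg (Ne.symm h)] at this
            exact this rfl
          rw [hkm]
          apply hmle
          rw [Finsupp.mem_support_iff]
          have hiα : ((α - Finsupp.single m 1 : Mon n) : Fin (n+1) → ℕ) i ≠ 0 := by
            rw [heq, Finsupp.add_apply]
            have := Finsupp.mem_support_iff.mp hi
            omega
          rw [Finsupp.tsub_apply] at hiα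
          omega
      · rw [← add_assoc, ← heq, hαeq]

lemma decomp_aux {J : Set (Mon n)} (hJ : IsMonomialIdeal J) {γ δ γ' δ' : Mon n}
    (hγ : γ ∈ minGens J) (hγ' : γ' ∈ minGens J) (h2 : minGeMax γ' δ')
    (heq : γ + δ = γ' + δ') {i : Fin (n + 1)} (hi : δ i < δ' i)
    (htop : ∀ j : Fin (n + 1), i < j → δ j = δ' j) : False := by
  have heqv : ∀ k, γ k + δ k = γ' k + δ' k := by
    intro k
    have := congrArg (fun f : Mon n => f k) heq
    simpa [Finsupp.add_apply] using this
  have hγi : γ' i < γ i := by have := heqv i; omega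
  have hiδ' : i ∈ δ'.support := Finsupp.mem_support_iff.mpr (by omega)
  have hγ'supp : ∀ k ∈ γ'.support, i ≤ k := fun k hk => h2 k hk i hiδ'
  have hle : γ' ≤ γ - Finsupp.single i 1 := by
    rw [Finsupp.le_def]
    intro k
    rw [Finsupp.tsub_apply, Finsupp.single_apply]
    rcases lt_trichotomy k i with hk | hk | hk
    · have hz : γ' k = 0 := by
        by_contra h
        exact absurd (hγ'supp k (Finsupp.mem_support_iff.mpr h)) (not_le.mpr hk)
      rw [if_neg (ne_of_gt hk)]
      omega
    · rw [hk, if_pos rfl]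
      omega
    · have h1 := htop k hk
      have h2 := heqv k
      rw [if_neg (ne_of_lt hk)]
      omega
  exact hγ.2 i (by omega) (mem_of_le hJ hγ'.1 hle)

lemma decomp_unique {J : Set (Mon n)} (hJ : IsMonomialIdeal J) {γ δ γ' δ' : Mon n}
    (hγ : γ ∈ minGens J) (h1 : minGeMax γ δ) (hγ' : γ' ∈ minGens J) (h2 : minGeMax γ' δ')
    (heq : γ + δ = γ' + δ') : γ = γ' ∧ δ = δ' := by
  have hδ : δ = δ' := by
    by_contra hne
    have hS : (Finset.univ.filter fun k => δ k ≠ δ' k).Nonempty := by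
      rw [Finset.filter_nonempty_iff]
      by_contra hc
      push_neg at hc
      exact hne (Finsupp.ext fun k => hc k (Finset.mem_univ k))
    obtain ⟨i, hine, htop⟩ :
        ∃ i : Fin (n + 1), δ i ≠ δ' i ∧ ∀ j : Fin (n + 1), i < j → δ j = δ' j := by
      refine ⟨(Finset.univ.filter fun k => δ k ≠ δ' k).max' hS, ?_, ?_⟩
      · have := (Finset.univ.filter fun k => δ k ≠ δ' k).max'_mem hS
        exact (Finset.mem_filter.mp this).2
      · intro j hj
        by_contra h
        have : j ≤ (Finset.univ.filter fun k => δ k ≠ δ' k).max' hS :=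
          Finset.le_max' _ j (Finset.mem_filter.mpr ⟨Finset.mem_univ j, h⟩)
        omega
    rcases lt_or_gt_of_ne hine with h | h
    · exact decomp_aux hJ hγ hγ' h2 heq h htop
    · exact decomp_aux hJ hγ' hγ h1 heq.symm h (fun j hj => (htop j hj).symm)
  subst hδ
  exact ⟨add_right_cancel heq, rfl⟩

lemma lex_min {J : Set (Mon n)} (hJ : IsMonomialIdeal J) {γ δ α : Mon n} (hγ : γ ∈ J)
    (hmm : minGeMax γ δ) (hsum : α = γ + δ) {η : Mon n} (hle : η ≤ α)
    (hout : α - η ∉ J) : lexLt δ η := by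
  have hαv : ∀ k, α k = γ k + δ k := by
    intro k
    rw [hsum]; rfl
  have hδη : δ ≠ η := by
    rintro rfl
    apply hout
    have : α - δ = γ := by rw [hsum, add_tsub_cancel_right]
    rwa [this]
  have hS : (Finset.univ.filter fun k => δ k ≠ η k).Nonempty := by
    rw [Finset.filter_nonempty_iff]
    by_contra hc
    push_neg at hc
    exact hδη (Finsupp.ext fun k => hc k (Finset.mem_univ k))
  obtain ⟨i, hine, htop⟩ :
      ∃ i : Fin (n + 1), δ i ≠ η i ∧ ∀ j : Fin (n + 1), i < j → δ j = η j := by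
    refine ⟨(Finset.univ.filter fun k => δ k ≠ η k).max' hS, ?_, ?_⟩
    · have := (Finset.univ.filter fun k => δ k ≠ η k).max'_mem hS
      exact (Finset.mem_filter.mp this).2
    · intro j hj
      by_contra h
      have : j ≤ (Finset.univ.filter fun k => δ k ≠ η k).max' hS :=
        Finset.le_max' _ j (Finset.mem_filter.mpr ⟨Finset.mem_univ j, h⟩)
      omega
  rcases lt_or_gt_of_ne hine with h | h
  · exact ⟨i, h, htop⟩
  · -- δ i > η i : contradiction, α - η ∈ J
    exfalso
    apply hout
    apply mem_of_le hJ hγ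
    rw [Finsupp.le_def]
    intro k
    rw [Finsupp.tsub_apply]
    have hηk := Finsupp.le_def.mp hle k
    have hαk := hαv k
    rcases lt_trichotomy k i with hk | hk | hk
    · have hz : γ k = 0 := by
        by_contra hne
        have hiδ : i ∈ δ.support := Finsupp.mem_support_iff.mpr (by omega)
        exact absurd (hmm k (Finsupp.mem_support_iff.mpr hne) i hiδ) (not_le.mpr hk)
      omega
    · rw [hk]
      have := hαv i
      have := Finsupp.le_def.mp hle i
      omega
    · have := htop k hk
      omega

end StmtZeroAux

open StmtZeroAux in
open MarkedFamilies in
/-- unique `∗_J` decomposition of monomials of a strongly stable ideal,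
and minimality of its cofactor with respect to `Lex`. -/
theorem stmt_0 {n : ℕ} (J : Set (Mon n)) (hJ : IsStronglyStable J)
    (α : Mon n) (hα : α ∈ J) :
    (∃! p : Mon n × Mon n,
        p.1 ∈ minGens J ∧ minGeMax p.1 p.2 ∧ α = p.1 + p.2) ∧
    (∀ γ δ : Mon n, γ ∈ minGens J → minGeMax γ δ → α = γ + δ →
      ∀ η : Mon n, η ≤ α → α - η ∉ J → lexLt δ η) := by
  constructor
  · obtain ⟨γ, δ, hγ, hmm, heq⟩ := exists_decomp hJ α hα
    refine ⟨(γ, δ), ⟨hγ, hmm, heq⟩, ?_⟩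
    rintro ⟨γ', δ'⟩ ⟨hγ', hmm', heq'⟩
    obtain ⟨h1, h2⟩ := decomp_unique hJ.1 hγ' hmm' hγ hmm (heq'.symm.trans heq)
    exact Prod.ext h1 h2
  · intro γ δ hγ hmm heq η hle hout
    exact lex_min hJ.1 hγ.1 hmm heq hle hout
end

section
/- Let J be a strongly stable monomial ideal in A[x₀,…,xₙ] and let x^β be a monomial not contained in J. If x^δ·x^β ∈ J, then either x^δ·x^β ∈ B_J, or x^δ·x^β = x^α ∗_J x^{δ'} with x^α ∈ B_J and x^δ >_Lex x^{δ'}. In particular, if x_i·x^β ∈ J for a single variable x_i, then either x_i·x^β ∈ B_J or i > min x^β. -/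
open MvPolynomial

namespace StmtTwoAux

open MarkedFamilies

lemma mdeg_add {n : ℕ} (a b : Mon n) : mdeg (a + b) = mdeg a + mdeg b := by
  simpa [mdeg] using Finsupp.sum_add_index' (f := a) (g := b)
    (h := fun (_ : Fin (n+1)) (e : ℕ) => e) (fun _ => rfl) (fun _ _ _ => rfl)

lemma mdeg_single {n : ℕ} (m : Fin (n + 1)) : mdeg (Finsupp.single m 1) = 1 := by
  simp [mdeg, Finsupp.sum_single_index]

lemma strip {n : ℕ} {J : Set (Mon n)} (hJ : IsStronglyStable J) (γ : Mon n)
    (hγ : γ ∈ J) (hng : γ ∉ minGens J) :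
    ∃ m : Fin (n+1), γ m ≠ 0 ∧ (∀ k ∈ γ.support, m ≤ k) ∧
      γ - Finsupp.single m 1 ∈ J := by
  simp only [minGens, Set.mem_setOf_eq, not_and, not_forall] at hng
  obtain ⟨j, hj0, hjJ'⟩ := hng hγ
  have hjJ : γ - Finsupp.single j 1 ∈ J := not_not.mp hjJ' 
  have hjs : j ∈ γ.support := Finsupp.mem_support_iff.mpr hj0
  have hne : γ.support.Nonempty := ⟨j, hjs⟩
  set m := γ.support.min' hne with hm
  have hms : m ∈ γ.support := γ.support.min'_mem hne
  have hm0 : γ m ≠ 0 := Finsupp.mem_support_iff.mp hms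
  have hmin : ∀ k ∈ γ.support, m ≤ k := fun k hk => γ.support.min'_le k hk
  rcases eq_or_lt_of_le (hmin j hjs) with h | h
  · exact ⟨m, hm0, hmin, by rwa [h]⟩
  · refine ⟨m, hm0, hmin, ?_⟩
    have hηm : (γ - Finsupp.single j 1 : Mon n) m ≠ 0 := by
      rw [Finsupp.tsub_apply, Finsupp.single_apply, if_neg (Ne.symm (ne_of_lt h))]
      simpa using hm0
    have := hJ.2 _ hjJ m hηm j h
    convert this using 1
    ext k
    have hj1 : 1 ≤ γ j := Nat.one_le_iff_ne_zero.mpr hj0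
    have hmj : m ≠ j := ne_of_lt h
    simp only [Finsupp.tsub_apply, Finsupp.add_apply, Finsupp.single_apply]
    by_cases hkj : j = k
    · subst hkj
      simp [hmj]
      omega
    · by_cases hkm : m = k
      · subst hkm
        simp [hkj]
      · simp [hkj, hkm]

lemma decomp {n : ℕ} {J : Set (Mon n)} (hJ : IsStronglyStable J) :
    ∀ γ ∈ J, ∃ α δ' : Mon n, α ∈ minGens J ∧ minGeMax α δ' ∧ γ = α + δ' := by
  suffices H : ∀ d : ℕ, ∀ γ : Mon n, mdeg γ ≤ d → γ ∈ J →
      ∃ α δ' : Mon n, α ∈ minGens J ∧ minGeMax α δ' ∧ γ = α + δ' by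
    exact fun γ hγ => H (mdeg γ) γ le_rfl hγ
  intro d
  induction d with
  | zero =>
    intro γ hd hγ
    by_cases hg : γ ∈ minGens J
    · refine ⟨γ, 0, hg, ?_, (add_zero γ).symm⟩
      intro i _ j hj
      simp at hj
    · obtain ⟨m, hm0, _, hmJ⟩ := strip hJ γ hγ hg
      exfalso
      have : mdeg γ ≠ 0 := by
        intro h
        have : γ m = 0 := by
          by_contra hc
          have : 0 < mdeg γ := by
            rw [mdeg]
            exact Finset.sum_pos' (fun _ _ => Nat.zero_le _)
              ⟨m, Finsupp.mem_support_iff.mpr hc, Nat.pos_of_ne_zero hc⟩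
          omega
        exact hm0 this
      omega
  | succ d ih =>
    intro γ hd hγ
    by_cases hg : γ ∈ minGens J
    · refine ⟨γ, 0, hg, ?_, (add_zero γ).symm⟩
      intro i _ j hj
      simp at hj
    · obtain ⟨m, hm0, hmin, hmJ⟩ := strip hJ γ hγ hg
      have heq : γ = (γ - Finsupp.single m 1) + Finsupp.single m 1 := by
        ext k
        have : 1 ≤ γ m := Nat.one_le_iff_ne_zero.mpr hm0
        simp only [Finsupp.tsub_apply, Finsupp.add_apply, Finsupp.single_apply]
        by_cases hkm : m = k
        · subst hkm
          simp
          omega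
        · simp [hkm]
      have hdeg : mdeg (γ - Finsupp.single m 1) ≤ d := by
        have h1 : mdeg γ = mdeg (γ - Finsupp.single m 1) + 1 := by
          conv_lhs => rw [heq]
          rw [mdeg_add, mdeg_single]
        omega
      obtain ⟨α, δ'', hα, hmm, hdec⟩ := ih (γ - Finsupp.single m 1) hdeg hmJ
      refine ⟨α, δ'' + Finsupp.single m 1, hα, ?_, by rw [heq, hdec, add_assoc]⟩
      intro i hi j hj
      have hj' := Finsupp.support_add hj
      rw [Finset.mem_union] at hj'
      rcases hj' with hj' | hj'
      · exact hmm i hi j hj'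
      · have hjm : j = m := Finset.mem_singleton.mp (Finsupp.support_single_subset hj')
        rw [hjm]
        apply hmin
        rw [Finsupp.mem_support_iff]
        have hle : α i ≤ γ i := by
          have h1 : α i + δ'' i = (γ - Finsupp.single m 1 : Mon n) i := by
            rw [hdec, Finsupp.add_apply]
          have h2 : (γ - Finsupp.single m 1 : Mon n) i ≤ γ i := by
            rw [Finsupp.tsub_apply]; omega
          omega
        have := Finsupp.mem_support_iff.mp hi
        omega

lemma part1 {n : ℕ} {J : Set (Mon n)} (hJ : IsStronglyStable J)
    {β : Mon n} (hβ : β ∉ J) (δ : Mon n) (hδ : δ + β ∈ J) :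
    δ + β ∈ minGens J ∨
      ∃ α δ' : Mon n, α ∈ minGens J ∧ minGeMax α δ' ∧ δ + β = α + δ' ∧ lexLt δ' δ := by
  by_cases hg : δ + β ∈ minGens J
  · exact Or.inl hg
  obtain ⟨α, δ', hα, hmm, heq⟩ := decomp hJ _ hδ
  refine Or.inr ⟨α, δ', hα, hmm, heq, ?_⟩
  have hpt : ∀ k, δ k + β k = α k + δ' k := by
    intro k
    have := congrArg (fun f : Mon n => f k) heq
    simpa using this
  have hne : δ' ≠ δ := by
    rintro rfl
    apply hβ
    have : β = α := by
      have h1 : δ' + β = δ' + α := by rw [heq, add_comm]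
      exact add_left_cancel h1
    rw [this]
    exact hα.1
  obtain ⟨k0, hk0⟩ := Finsupp.ne_iff.mp hne
  set s : Finset (Fin (n+1)) :=
    (δ.support ∪ δ'.support).filter (fun k => δ k ≠ δ' k) with hs
  have hsne : s.Nonempty := by
    refine ⟨k0, ?_⟩
    rw [hs, Finset.mem_filter, Finset.mem_union, Finsupp.mem_support_iff,
      Finsupp.mem_support_iff]
    constructor
    · by_cases h : δ k0 = 0
      · right; rw [h] at hk0; exact fun hc => hk0 (by omega)
      · left; exact h
    · exact fun h => hk0 h.symm
  set i := s.max' hsne with hi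
  have his : i ∈ s := s.max'_mem hsne
  have hidiff : δ i ≠ δ' i := (Finset.mem_filter.mp his).2
  have hgt : ∀ j, i < j → δ' j = δ j := by
    intro j hij
    by_contra hc
    have hjs : j ∈ s := by
      rw [hs, Finset.mem_filter, Finset.mem_union, Finsupp.mem_support_iff,
        Finsupp.mem_support_iff]
      refine ⟨?_, fun h => hc h.symm⟩
      by_cases h : δ j = 0
      · right; exact fun h2 => hc (by omega)
      · left; exact h
    exact absurd (s.le_max' j hjs) (not_le.mpr hij)
  refine ⟨i, ?_, hgt⟩
  by_contra hlt
  have hlt' : δ i < δ' i := by omega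
  have hisupp : i ∈ δ'.support := Finsupp.mem_support_iff.mpr (by omega)
  have hαsmall : ∀ k, α k ≠ 0 → i ≤ k :=
    fun k hk => hmm k (Finsupp.mem_support_iff.mpr hk) i hisupp
  have hle : ∀ k, α k ≤ β k := by
    intro k
    rcases lt_trichotomy k i with h | h | h
    · have : α k = 0 := by
        by_contra hc
        exact absurd (hαsmall k hc) (not_le.mpr h)
      omega
    · subst h
      have := hpt i
      omega
    · have h1 := hgt k h
      have := hpt k
      omega
  apply hβ
  have hfin : α + (β - α) = β := by
    ext k
    have := hle k
    rw [Finsupp.add_apply, Finsupp.tsub_apply]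
    omega
  rw [← hfin]
  exact hJ.1 α hα.1 (β - α)

end StmtTwoAux

open MarkedFamilies in
/-- for `x^β ∉ J` with `x^δ x^β ∈ J`, either `x^δ x^β ∈ B_J` or
`x^δ x^β = x^α ∗_J x^{δ'}` with `x^{δ'} <Lex x^δ`; in particular for `x_i x^β ∈ J`,
either `x_i x^β ∈ B_J` or `i > min x^β`. -/
theorem stmt_2 {n : ℕ} (J : Set (Mon n)) (hJ : IsStronglyStable J)
    (β : Mon n) (hβ : β ∉ J) :
    (∀ δ : Mon n, δ + β ∈ J →
      δ + β ∈ minGens J ∨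
        ∃ α δ' : Mon n, α ∈ minGens J ∧ minGeMax α δ' ∧ δ + β = α + δ' ∧ lexLt δ' δ) ∧
    (∀ i : Fin (n + 1), Finsupp.single i 1 + β ∈ J →
      Finsupp.single i 1 + β ∈ minGens J ∨ ∃ j : Fin (n + 1), β j ≠ 0 ∧ j < i) := by
  refine ⟨StmtTwoAux.part1 hJ hβ, ?_⟩
  intro i hi
  rcases StmtTwoAux.part1 hJ hβ (Finsupp.single i 1) hi with ho | ⟨α, δ', hα, hmm, heq, k, hk, hgt⟩
  · exact Or.inl ho
  have hpt : ∀ l, Finsupp.single i 1 l + β l = α l + δ' l := by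
    intro l
    have := congrArg (fun f : Mon n => f l) heq
    simpa using this
  have hki : k = i ∧ δ' i = 0 := by
    have h1 : Finsupp.single i 1 k ≠ 0 := by omega
    rw [Finsupp.single_apply] at h1 hk
    by_cases h : i = k
    · subst h
      simp at hk
      exact ⟨rfl, by omega⟩
    · simp [h] at h1
  obtain ⟨rfl, hδi⟩ := hki
  have hzero : ∀ j, k ≤ j → δ' j = 0 := by
    intro j hj
    rcases eq_or_lt_of_le hj with h | h
    · rw [← h]; exact hδi
    · have := hgt j h
      rw [Finsupp.single_apply, if_neg (fun he => absurd he (ne_of_lt h))] at this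
      exact this
  by_cases hz : δ' = 0
  · subst hz
    rw [add_zero] at heq
    rw [heq]
    exact Or.inl hα
  · obtain ⟨j, hj⟩ := Finsupp.ne_iff.mp hz
    simp only [Finsupp.coe_zero, Pi.zero_apply] at hj
    have hji : j < k := by
      by_contra h
      exact hj (hzero j (not_lt.mp h))
    refine Or.inr ⟨j, ?_, hji⟩
    have := hpt j
    rw [Finsupp.single_apply, if_neg (fun he => absurd he (ne_of_gt hji))] at this
    omega
end

section
/- Let J be a strongly stable monomial ideal in A[x₀,…,xₙ] over a commutative noetherian ring A, F_J a J-marked set, and I = (F_J) the ideal it generates. Then for every degree s, the degree-s homogeneous component satisfies I_s = ⟨F_J^{(s)}⟩ + ⟨F̂_J^{(s)}⟩ = ⟨F_J^{(s)}⟩ + ⟨SF_J^{(s)}⟩ as A-modules. -/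
open MvPolynomial

/-!
The ideal `(F_J)` is spanned over `A` by the products `x^δ f_α`, and each of them is homogeneous
of degree `|δ| + |α|` since `f_α` is; projecting onto degree `s` gives `I_s = ⟨F_J^{(s)} ∪ F̂_J^{(s)}⟩`.
For the second equality, every `x^δ f_β ∈ F̂_J^{(s)}` differs from an element of `F_J^{(s)}` by an
element of `SF_J^{(s)}`: strong stability yields the Eliahou–Kervaire decomposition
`x^δ x^β = x^γ x^α` with `x^α ∈ B_J` and `min x^α ≥ max x^γ`, obtained by peeling off the
smallest variable one at a time.
-/

open MvPolynomial MarkedFamilies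

namespace MvPolynomial

variable {σ R ι : Type*} [CommSemiring R]

theorem span_range_inf_homogeneousSubmodule (g : ι → MvPolynomial σ R) (deg : ι → ℕ)
    (hg : ∀ i, (g i).IsHomogeneous (deg i)) (s : ℕ) :
    Submodule.span R (Set.range g) ⊓ homogeneousSubmodule σ R s =
      Submodule.span R (g '' {i | deg i = s}) := by
  refine le_antisymm ?_ ?_
  · rintro f ⟨hf, hfs⟩
    have hproj := Submodule.mem_map_of_mem (f := homogeneousComponent s) hf
    rw [Submodule.map_span, ← Set.range_comp, homogeneousComponent_of_mem hfs, if_pos rfl]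
      at hproj
    refine Submodule.span_le.mpr ?_ hproj
    rintro _ ⟨i, rfl⟩
    rw [Function.comp_apply, homogeneousComponent_of_mem (hg i)]
    split_ifs with hi
    · exact Submodule.subset_span ⟨i, hi.symm, rfl⟩
    · exact Submodule.zero_mem _
  · rw [Submodule.span_le]
    rintro _ ⟨i, hi, rfl⟩
    exact ⟨Submodule.subset_span ⟨i, rfl⟩, hi ▸ hg i⟩

theorem restrictScalars_ideal_span_range (f : ι → MvPolynomial σ R) :
    (Ideal.span (Set.range f)).restrictScalars R =
      Submodule.span R (Set.range fun p : (σ →₀ ℕ) × ι => monomial p.1 1 * f p.2) := by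
  rw [Ideal.span, ← Submodule.span_smul_of_span_eq_top (basisMonomials σ R).span_eq]
  congr 1
  ext
  simp [Set.mem_smul, coe_basisMonomials, eq_comm]

end MvPolynomial

namespace MarkedFamilies

variable {n : ℕ}

theorem mdeg_add (α β : Mon n) : mdeg (α + β) = mdeg α + mdeg β :=
  map_add Finsupp.degree α β

theorem minGeMax_add_single {α γ : Mon n} {m : Fin (n + 1)} (h : minGeMax α γ)
    (hm : ∀ i ∈ α.support, m ≤ i) : minGeMax α (γ + Finsupp.single m 1) := by
  intro i hi k hk
  rcases Finset.mem_union.mp (Finsupp.support_add hk) with hk | hk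
  · exact h i hi k hk
  · obtain rfl := Finset.mem_singleton.mp (Finsupp.support_single_subset hk)
    exact hm i hi

theorem IsStronglyStable.sub_single_mem_of_le {J : Set (Mon n)} (hJ : IsStronglyStable J)
    {ε : Mon n} {i j : Fin (n + 1)} (hij : i ≤ j) (hi : ε i ≠ 0) (hj : ε j ≠ 0)
    (hεj : ε - Finsupp.single j 1 ∈ J) : ε - Finsupp.single i 1 ∈ J := by
  rcases hij.eq_or_lt with rfl | hlt
  · exact hεj
  · have hmove := hJ.2 _ hεj i (by simp [hlt.ne, hi]) j hlt
    convert hmove using 1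
    ext k
    simp only [Finsupp.add_apply, Finsupp.tsub_apply, Finsupp.single_apply]
    split_ifs <;> subst_vars <;> omega

theorem IsStronglyStable.exists_minGens_add {J : Set (Mon n)} (hJ : IsStronglyStable J)
    (ε : Mon n) (hε : ε ∈ J) : ∃ α ∈ minGens J, ∃ γ, minGeMax α γ ∧ ε = γ + α := by
  induction ε using WellFoundedLT.induction with
  | ind ε ih =>
  by_cases hmin : ε ∈ minGens J
  · exact ⟨ε, hmin, 0, fun _ _ _ hk => absurd hk (by simp), (zero_add ε).symm⟩
  obtain ⟨j, hj, hεj⟩ : ∃ j, ε j ≠ 0 ∧ ε - Finsupp.single j 1 ∈ J := by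
    simpa [minGens, hε] using hmin
  have hsupp : ε.support.Nonempty := ⟨j, Finsupp.mem_support_iff.mpr hj⟩
  set m := ε.support.min' hsupp
  have hm : ε m ≠ 0 := Finsupp.mem_support_iff.mp (ε.support.min'_mem hsupp)
  have hle : Finsupp.single m 1 ≤ ε := by
    simpa [Finsupp.single_le_iff, Nat.one_le_iff_ne_zero] using hm
  have hlt : ε - Finsupp.single m 1 < ε := by
    refine tsub_le_self.lt_of_ne fun heq => hm ?_
    have := congr($heq m)
    simp only [Finsupp.tsub_apply, Finsupp.single_eq_same] at this
    omega
  obtain ⟨α, hα, γ, hαγ, hsplit⟩ := ih _ hlt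
    (hJ.sub_single_mem_of_le (ε.support.min'_le _ (Finsupp.mem_support_iff.mpr hj)) hm hj hεj)
  refine ⟨α, hα, γ + Finsupp.single m 1, minGeMax_add_single hαγ fun i hi => ?_, ?_⟩
  · have hεi := congr($hsplit i)
    rw [Finsupp.mem_support_iff] at hi
    simp only [Finsupp.tsub_apply, Finsupp.add_apply] at hεi
    exact ε.support.min'_le _ (Finsupp.mem_support_iff.mpr (by omega))
  · rw [add_right_comm, ← hsplit, tsub_add_cancel_of_le hle]

section Marked

variable {A : Type*} [CommRing A] {J : Set (Mon n)} {F : Mon n → MvPolynomial (Fin (n + 1)) A}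

theorem IsMarkedSet.isHomogeneous (hF : IsMarkedSet J F) {α : Mon n} (hα : α ∈ minGens J) :
    (F α).IsHomogeneous (mdeg α) := by
  intro β hβ
  rw [Pi.one_def, ← Finsupp.degree_eq_weight_one]
  rcases eq_or_ne β α with rfl | hne
  · rfl
  · exact ((hF α hα).2 β (mem_support_iff.mpr hβ) hne).2

theorem IsMarkedSet.isHomogeneous_monomial_mul (hF : IsMarkedSet J F) {α : Mon n}
    (hα : α ∈ minGens J) (δ : Mon n) :
    (monomial δ (1 : A) * F α).IsHomogeneous (mdeg α + mdeg δ) :=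
  add_comm (mdeg δ) _ ▸ (isHomogeneous_monomial 1 rfl).mul (hF.isHomogeneous hα)

theorem restrictScalars_markedIdeal :
    (markedIdeal J F).restrictScalars A = Submodule.span A
      (Set.range fun p : Mon n × minGens J => monomial p.1 (1 : A) * F p.2) := by
  rw [markedIdeal, Set.image_eq_range]
  exact restrictScalars_ideal_span_range _

theorem FSet_union_FHatSet (s : ℕ) :
    FSet J F s ∪ FHatSet J F s =
      (fun p : Mon n × minGens J => monomial p.1 (1 : A) * F p.2) ''
        {p | mdeg (p.2 : Mon n) + mdeg p.1 = s} := by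
  ext f
  constructor
  · rintro (⟨α, δ, hα, hs, -, rfl⟩ | ⟨α, δ, hα, hs, -, rfl⟩) <;> exact ⟨(δ, ⟨α, hα⟩), hs, rfl⟩
  · rintro ⟨⟨δ, α, hα⟩, hs, rfl⟩
    by_cases hαδ : minGeMax α δ
    · exact Or.inl ⟨α, δ, hα, hs, hαδ, rfl⟩
    · exact Or.inr ⟨α, δ, hα, hs, hαδ, rfl⟩

theorem idealDeg_markedIdeal (hF : IsMarkedSet J F) (s : ℕ) :
    idealDeg A (markedIdeal J F) s =
      Submodule.span A (FSet J F s) ⊔ Submodule.span A (FHatSet J F s) := by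
  rw [← Submodule.span_union, FSet_union_FHatSet, idealDeg, restrictScalars_markedIdeal]
  have hhom : ∀ p : Mon n × minGens J,
      (monomial p.1 (1 : A) * F p.2).IsHomogeneous (mdeg (p.2 : Mon n) + mdeg p.1) :=
    fun p => hF.isHomogeneous_monomial_mul p.2.2 p.1
  exact span_range_inf_homogeneousSubmodule _ _ hhom s

theorem span_SFSet_le (s : ℕ) :
    Submodule.span A (SFSet J F s) ≤
      Submodule.span A (FSet J F s) ⊔ Submodule.span A (FHatSet J F s) := by
  rw [Submodule.span_le]
  rintro _ ⟨α, γ, β, δ, hα, hβ, hβδ, hβδ', hαγ, hαγ', -, rfl⟩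
  exact sub_mem (Submodule.mem_sup_right (Submodule.subset_span ⟨β, δ, hβ, hβδ, hβδ', rfl⟩))
    (Submodule.mem_sup_left (Submodule.subset_span ⟨α, γ, hα, hαγ, hαγ', rfl⟩))

theorem span_FHatSet_le (hJ : IsStronglyStable J) (s : ℕ) :
    Submodule.span A (FHatSet J F s) ≤
      Submodule.span A (FSet J F s) ⊔ Submodule.span A (SFSet J F s) := by
  rw [Submodule.span_le]
  rintro _ ⟨β, δ, hβ, hβδ, hβδ', rfl⟩
  obtain ⟨α, hα, γ, hαγ, hsplit⟩ :=
    hJ.exists_minGens_add (δ + β) (add_comm β δ ▸ hJ.1 β hβ.1 δ)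
  have hαγ_deg : mdeg α + mdeg γ = s := by
    have := congrArg mdeg hsplit
    rw [mdeg_add, mdeg_add] at this
    omega
  rw [← sub_add_cancel (monomial δ (1 : A) * F β) (monomial γ 1 * F α)]
  exact add_mem
    (Submodule.mem_sup_right
      (Submodule.subset_span ⟨α, γ, β, δ, hα, hβ, hβδ, hβδ', hαγ_deg, hαγ, hsplit, rfl⟩))
    (Submodule.mem_sup_left (Submodule.subset_span ⟨α, γ, hα, hαγ_deg, hαγ, rfl⟩))

end Marked

end MarkedFamilies

open MarkedFamilies in
theorem stmt_3_general {n : ℕ} {A : Type*} [CommRing A]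
    (J : Set (Mon n)) (hJ : IsStronglyStable J)
    (F : Mon n → MvPolynomial (Fin (n + 1)) A) (hF : IsMarkedSet J F) (s : ℕ) :
    idealDeg A (markedIdeal J F) s
        = Submodule.span A (FSet J F s) ⊔ Submodule.span A (FHatSet J F s) ∧
    idealDeg A (markedIdeal J F) s
        = Submodule.span A (FSet J F s) ⊔ Submodule.span A (SFSet J F s) := by
  have hdeg := idealDeg_markedIdeal hF s
  refine ⟨hdeg, hdeg.trans (le_antisymm ?_ ?_)⟩
  · exact sup_le le_sup_left (span_FHatSet_le hJ s)
  · exact sup_le le_sup_left (span_SFSet_le s)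

open MarkedFamilies in
/-- `I_s = ⟨F_J^{(s)}⟩ + ⟨F̂_J^{(s)}⟩ = ⟨F_J^{(s)}⟩ + ⟨SF_J^{(s)}⟩`. -/
theorem stmt_3 {n : ℕ} {A : Type*} [CommRing A] [IsNoetherianRing A]
    (J : Set (Mon n)) (hJ : IsStronglyStable J)
    (F : Mon n → MvPolynomial (Fin (n + 1)) A) (hF : IsMarkedSet J F) (s : ℕ) :
    idealDeg A (markedIdeal J F) s
        = Submodule.span A (FSet J F s) ⊔ Submodule.span A (FHatSet J F s) ∧
    idealDeg A (markedIdeal J F) s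
        = Submodule.span A (FSet J F s) ⊔ Submodule.span A (SFSet J F s) :=
  stmt_3_general J hJ F hF s
end
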